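/- arXiv:1404.0995 — 5 statements merged into one kernel-verified Lean document; each statement's English description precedes it below -/
import Mathlib

section
/- Assume the Kirszbraun extension property: every 1-Lipschitz (nonexpansive) map F from a finite subset S of ℝ² to a metric space X extends to a 1-Lipschitz map ℝ² → X. If f : {ā₁,ā₂,ā₃} → X is an isometry onto {a₁,a₂,a₃} where (ā₁,ā₂,ā₃) is the comparison triangle of (a₁,a₂,a₃), then r(a₁,a₂,a₃) ≤ r(ā₁,ā₂,ā₃). -/
/-! The map `bᵢ ↦ aᵢ` is an isometry of finite sets, so by the Kirszbraun property it extends to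
a nonexpansive `F : ℝ² → X`. Then `dist (F y) aᵢ ≤ ‖y - bᵢ‖` for every `y` in the plane, so the
radius function of the triangle in `X` at `F y` is bounded by that of the comparison triangle
at `y`. -/

open Function

def HasFiniteLipschitzExtension (E X : Type*) [PseudoMetricSpace E] [PseudoMetricSpace X] :
    Prop :=
  ∀ (S : Finset E) (f : E → X), LipschitzOnWith 1 f (S : Set E) →
    ∃ F : E → X, LipschitzWith 1 F ∧ ∀ s ∈ S, F s = f s

section

variable {ι E X : Type*} [PseudoMetricSpace E] [MetricSpace X]

theorem factorsThrough_of_dist_le {a : ι → X} {b : ι → E}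
    (hab : ∀ i j, dist (a i) (a j) ≤ dist (b i) (b j)) : FactorsThrough a b := fun i j hij =>
  dist_le_zero.mp <| (hab i j).trans_eq <| by rw [hij, dist_self]

theorem lipschitzOnWith_one_extend {a : ι → X} {b : ι → E}
    (hab : ∀ i j, dist (a i) (a j) ≤ dist (b i) (b j)) (e : E → X) :
    LipschitzOnWith 1 (extend b a e) (Set.range b) := by
  refine LipschitzOnWith.of_dist_le_mul ?_
  rintro _ ⟨i, rfl⟩ _ ⟨j, rfl⟩
  simpa only [(factorsThrough_of_dist_le hab).extend_apply, NNReal.coe_one, one_mul] using hab i j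

theorem HasFiniteLipschitzExtension.exists_lipschitzWith_comp_eq [Finite ι] [Nonempty X]
    (hE : HasFiniteLipschitzExtension E X) {a : ι → X} {b : ι → E}
    (hab : ∀ i j, dist (a i) (a j) ≤ dist (b i) (b j)) :
    ∃ F : E → X, LipschitzWith 1 F ∧ F ∘ b = a := by
  classical
  have : Fintype ι := Fintype.ofFinite ι
  let e : E → X := fun _ => Classical.arbitrary X
  obtain ⟨F, hF, hFS⟩ := hE (Finset.univ.image b) (extend b a e)
    (by simpa using lipschitzOnWith_one_extend hab e)
  refine ⟨F, hF, funext fun i => ?_⟩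
  rw [comp_apply, hFS (b i) (by simp), (factorsThrough_of_dist_le hab).extend_apply]

end

theorem iInf_max_dist_comp_le_of_lipschitzWith {E X : Type*} [PseudoMetricSpace E]
    [PseudoMetricSpace X] [Nonempty E] {F : E → X} (hF : LipschitzWith 1 F) (b₁ b₂ b₃ : E) :
    ⨅ x : X, max (max (dist x (F b₁)) (dist x (F b₂))) (dist x (F b₃)) ≤
      ⨅ y : E, max (max (dist y b₁) (dist y b₂)) (dist y b₃) := by
  have hbdd : BddBelow (Set.range fun x : X =>
      max (max (dist x (F b₁)) (dist x (F b₂))) (dist x (F b₃))) :=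
    ⟨0, by rintro _ ⟨x, rfl⟩; positivity⟩
  refine le_ciInf fun y => (ciInf_le hbdd (F y)).trans ?_
  have hF' : ∀ b, dist (F y) (F b) ≤ dist y b := fun b => by simpa using hF.dist_le_mul y b
  exact max_le_max (max_le_max (hF' b₁) (hF' b₂)) (hF' b₃)

/-- Assuming the Kirszbraun extension property for maps from finite subsets of the
Euclidean plane into `X`, any triangle in `X` has circumradius at most the circumradius
of its Euclidean comparison triangle. -/
theorem circumradius_le_of_kirszbraun {X : Type*} [MetricSpace X]
    (hKirszbraun : ∀ (S : Finset (EuclideanSpace ℝ (Fin 2)))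
      (f : EuclideanSpace ℝ (Fin 2) → X), LipschitzOnWith 1 f (S : Set (EuclideanSpace ℝ (Fin 2))) →
      ∃ F : EuclideanSpace ℝ (Fin 2) → X, LipschitzWith 1 F ∧ ∀ s ∈ S, F s = f s)
    (a₁ a₂ a₃ : X) (b₁ b₂ b₃ : EuclideanSpace ℝ (Fin 2))
    (h₁₂ : ‖b₁ - b₂‖ = dist a₁ a₂) (h₁₃ : ‖b₁ - b₃‖ = dist a₁ a₃)
    (h₂₃ : ‖b₂ - b₃‖ = dist a₂ a₃) :
    (⨅ x : X, max (max (dist x a₁) (dist x a₂)) (dist x a₃)) ≤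
      ⨅ x : EuclideanSpace ℝ (Fin 2), max (max ‖x - b₁‖ ‖x - b₂‖) ‖x - b₃‖ := by
  have : Nonempty X := ⟨a₁⟩
  have hab : ∀ i j, dist (![a₁, a₂, a₃] i) (![a₁, a₂, a₃] j) ≤
      dist (![b₁, b₂, b₃] i) (![b₁, b₂, b₃] j) := by
    intro i j
    fin_cases i <;> fin_cases j <;>
      simp [dist_eq_norm (E := EuclideanSpace ℝ (Fin 2)), norm_sub_rev b₂ b₁, norm_sub_rev b₃ b₁,
        norm_sub_rev b₃ b₂, h₁₂, h₁₃, h₂₃, dist_comm]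
  obtain ⟨F, hF, hFb⟩ :=
    HasFiniteLipschitzExtension.exists_lipschitzWith_comp_eq hKirszbraun hab
  obtain ⟨hF₁, hF₂, hF₃⟩ : F b₁ = a₁ ∧ F b₂ = a₂ ∧ F b₃ = a₃ :=
    ⟨congrFun hFb 0, congrFun hFb 1, congrFun hFb 2⟩
  simpa only [← dist_eq_norm, hF₁, hF₂, hF₃] using
    iInf_max_dist_comp_le_of_lipschitzWith hF b₁ b₂ b₃
end

section
/- Let X be a geodesic metric space with Curv X ≥ κ in the following sense: for every triangle (a₁,a₂,a₃) in X with Euclidean (κ = 0) comparison triangle (ā₁,ā₂,ā₃), one has r(a₁,a₂,a₃) ≥ r(ā₁,ā₂,ā₃). Then X is non-branching: if x, y, y' ∈ X with dist(x,y) = dist(x,y') and there exists a common midpoint z (i.e., dist(x,z) = (1/2)·dist(x,y), dist(z,y) = (1/2)·dist(x,y), and the same with y'), then y = y'. -/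
/-- A geodesic space: every pair of points admits `t`-midpoints for all `t ∈ [0,1]`. -/
def GeodesicSpace (X : Type*) [MetricSpace X] : Prop :=
  ∀ x y : X, ∀ t ∈ Set.Icc (0 : ℝ) 1,
    ∃ m : X, dist x m = t * dist x y ∧ dist m y = (1 - t) * dist x y

/-- An auxiliary constructor for points of the Euclidean plane. -/
noncomputable def nbPt (a b : ℝ) : EuclideanSpace ℝ (Fin 2) :=
  (WithLp.equiv 2 (Fin 2 → ℝ)).symm ![a, b]

lemma nbPt_norm (a b : ℝ) : ‖nbPt a b‖ = Real.sqrt (a ^ 2 + b ^ 2) := by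
  rw [EuclideanSpace.norm_eq]
  simp [nbPt, Fin.sum_univ_two, sq_abs]

lemma nbPt_sub (a b c d : ℝ) : nbPt a b - nbPt c d = nbPt (a - c) (b - d) := by
  ext i; fin_cases i <;> simp [nbPt]

lemma nbPt_add (a b c d : ℝ) : nbPt a b + nbPt c d = nbPt (a + c) (b + d) := by
  ext i; fin_cases i <;> simp [nbPt]

lemma nbPt_neg (a b : ℝ) : -(nbPt a b) = nbPt (-a) (-b) := by
  ext i; fin_cases i <;> simp [nbPt]

lemma real_circum_lb (h e d A B C s : ℝ)
    (hhpos : 0 < h) (hepos : 0 < e) (heled : e ≤ d)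
    (hh2 : h ^ 2 = d ^ 2 - e ^ 2 / 4)
    (hs0 : 0 ≤ s) (hB0 : 0 ≤ B) (hC0 : 0 ≤ C)
    (hAlb : h - s ≤ A)
    (hpar : B ^ 2 + C ^ 2 = 2 * s ^ 2 + e ^ 2 / 2) :
    d ^ 2 / (2 * h) ≤ max (max A B) C := by
  set R := max (max A B) C with hR
  have hRA : A ≤ R := le_trans (le_max_left _ _) (le_max_left _ _)
  have hRB : B ≤ R := le_trans (le_max_right _ _) (le_max_left _ _)
  have hRC : C ≤ R := le_max_right _ _
  have hR0 : 0 ≤ R := le_trans hC0 hRC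
  clear_value R
  have hB2 : B ^ 2 ≤ R ^ 2 := by nlinarith
  have hC2 : C ^ 2 ≤ R ^ 2 := by nlinarith
  have hR2 : s ^ 2 + e ^ 2 / 4 ≤ R ^ 2 := by nlinarith
  rw [div_le_iff₀ (by positivity)]
  rcases le_or_gt h R with hcase | hcase
  · nlinarith
  · have hsge : h - R ≤ s := by linarith
    have h2 : (h - R) ^ 2 ≤ s ^ 2 := by nlinarith
    nlinarith

set_option maxHeartbeats 1000000 in
/-- A geodesic space satisfying the lower curvature bound `Curv ≥ 0` (circumradius of
every triangle at least the circumradius of its Euclidean comparison triangle) is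
non-branching (case `t = 1/2`). -/
theorem nonbranching_of_curv_ge {X : Type*} [MetricSpace X]
    (hgeo : GeodesicSpace X)
    (hcurv : ∀ (a₁ a₂ a₃ : X) (b₁ b₂ b₃ : EuclideanSpace ℝ (Fin 2)),
      ‖b₁ - b₂‖ = dist a₁ a₂ → ‖b₁ - b₃‖ = dist a₁ a₃ → ‖b₂ - b₃‖ = dist a₂ a₃ →
      (⨅ x : EuclideanSpace ℝ (Fin 2), max (max ‖x - b₁‖ ‖x - b₂‖) ‖x - b₃‖) ≤
        ⨅ x : X, max (max (dist x a₁) (dist x a₂)) (dist x a₃))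
    (x y y' : X) (hxy : dist x y = dist x y')
    (z : X)
    (hz₁ : dist x z = (1 / 2) * dist x y) (hz₂ : dist z y = (1 / 2) * dist x y)
    (hz₁' : dist x z = (1 / 2) * dist x y') (hz₂' : dist z y' = (1 / 2) * dist x y') :
    y = y' := by
  by_cases h0 : dist x y = 0
  · have h1 : x = y := dist_eq_zero.mp h0
    have h2 : x = y' := dist_eq_zero.mp (hxy ▸ h0)
    exact h1 ▸ h2
  by_contra hne
  set d := dist x y with hd
  have hdpos : 0 < d := lt_of_le_of_ne dist_nonneg (Ne.symm h0)
  set e := dist y y' with he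
  have hepos : 0 < e := dist_pos.mpr hne
  have heled : e ≤ d := by
    calc e ≤ dist y z + dist z y' := dist_triangle _ _ _
      _ = d / 2 + d / 2 := by rw [dist_comm y z, hz₂, hz₂', ← hxy]; ring
      _ = d := by ring
  set h := Real.sqrt (d ^ 2 - e ^ 2 / 4) with hh
  have hh2 : h ^ 2 = d ^ 2 - e ^ 2 / 4 := Real.sq_sqrt (by nlinarith)
  have hhpos : 0 < h := Real.sqrt_pos.mpr (by nlinarith)
  have hhd : h < d := by nlinarith
  set b₁ : EuclideanSpace ℝ (Fin 2) := nbPt 0 h with hb₁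
  set b₃ : EuclideanSpace ℝ (Fin 2) := nbPt (e / 2) 0 with hb₃
  set b₂ : EuclideanSpace ℝ (Fin 2) := -b₃ with hb₂
  have nb₁ : ‖b₁‖ = h := by
    rw [hb₁, nbPt_norm]
    rw [show (0:ℝ) ^ 2 + h ^ 2 = h ^ 2 by ring, Real.sqrt_sq hhpos.le]
  have nb₃ : ‖b₃‖ = e / 2 := by
    rw [hb₃, nbPt_norm]
    rw [show (e / 2) ^ 2 + (0:ℝ) ^ 2 = (e / 2) ^ 2 by ring,
      Real.sqrt_sq (by positivity)]
  have hb12 : ‖b₁ - b₂‖ = dist x y := by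
    rw [hb₂, hb₁, hb₃, sub_neg_eq_add, nbPt_add, nbPt_norm, ← hd]
    rw [show (0 + e / 2) ^ 2 + (h + 0) ^ 2 = d ^ 2 by nlinarith,
      Real.sqrt_sq hdpos.le]
  have hb13 : ‖b₁ - b₃‖ = dist x y' := by
    rw [hb₁, hb₃, nbPt_sub, nbPt_norm, ← hxy]
    rw [show (0 - e / 2) ^ 2 + (h - 0) ^ 2 = d ^ 2 by nlinarith,
      Real.sqrt_sq hdpos.le]
  have hb23 : ‖b₂ - b₃‖ = dist y y' := by
    rw [hb₂, hb₃, nbPt_neg, nbPt_sub, nbPt_norm, ← he]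
    rw [show (-(e / 2) - e / 2) ^ 2 + (-0 - (0:ℝ)) ^ 2 = e ^ 2 by ring,
      Real.sqrt_sq hepos.le]
  clear_value b₂ b₁ b₃
  clear_value h
  -- the X-side circumradius is at most d/2, witnessed by z
  have hXbdd : BddBelow (Set.range fun w : X =>
      max (max (dist w x) (dist w y)) (dist w y')) := by
    refine ⟨0, ?_⟩
    rintro _ ⟨w, rfl⟩
    positivity
  have hinfX : (⨅ w : X, max (max (dist w x) (dist w y)) (dist w y')) ≤ d / 2 := by
    refine ciInf_le_of_le hXbdd z ?_
    have h1 : dist z x = d / 2 := by rw [dist_comm, hz₁]; ring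
    have h2 : dist z y = d / 2 := by rw [hz₂]; ring
    have h3 : dist z y' = d / 2 := by rw [hz₂', ← hxy]; ring
    simp [h1, h2, h3]
  -- the Euclidean circumradius is at least d²/(2h) > d/2
  have key : ∀ p : EuclideanSpace ℝ (Fin 2),
      d ^ 2 / (2 * h) ≤ max (max ‖p - b₁‖ ‖p - b₂‖) ‖p - b₃‖ := by
    intro p
    have hAlb : h - ‖p‖ ≤ ‖p - b₁‖ := by
      have h1 : ‖b₁‖ - ‖p‖ ≤ ‖b₁ - p‖ := norm_sub_norm_le _ _
      rw [norm_sub_rev, nb₁] at h1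
      exact h1
    have hpar : ‖p - b₂‖ ^ 2 + ‖p - b₃‖ ^ 2 = 2 * ‖p‖ ^ 2 + e ^ 2 / 2 := by
      have h1 := parallelogram_law_with_norm ℝ p b₃
      have h2 : p + b₃ = p - b₂ := by rw [hb₂, sub_neg_eq_add]
      rw [h2, nb₃] at h1
      linear_combination h1
    exact real_circum_lb h e d _ _ _ _ hhpos hepos heled hh2 (norm_nonneg _)
      (norm_nonneg _) (norm_nonneg _) hAlb hpar
  have hinfE : d ^ 2 / (2 * h) ≤
      ⨅ p : EuclideanSpace ℝ (Fin 2), max (max ‖p - b₁‖ ‖p - b₂‖) ‖p - b₃‖ :=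
    le_ciInf key
  have hmain := hcurv x y y' b₁ b₂ b₃ hb12 hb13 hb23
  have hfinal : d ^ 2 / (2 * h) ≤ d / 2 :=
    le_trans hinfE (le_trans hmain hinfX)
  rw [div_le_div_iff₀ (by positivity) (by norm_num)] at hfinal
  nlinarith
end

section
/- In the Euclidean plane, let (x̄, ȳ, ȳ') be a triangle with ‖x̄ - ȳ‖ = ‖x̄ - ȳ'‖ = d > 0, ȳ ≠ ȳ', and ‖ȳ - ȳ'‖ ≤ d. Then the circumradius min_{z} max{‖z-x̄‖, ‖z-ȳ‖, ‖z-ȳ'‖} is strictly greater than d/2. -/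
/-! Let `m` be the midpoint of the base `y y'`, `a` half the base and `h = |x m|`, so that
`h² + a² = d²` by Apollonius. For any centre `z` with `|z x|, |z y|, |z y'| ≤ t`, Apollonius at `z`
gives `|z m|² + a² ≤ t²`, and the triangle inequality gives `h ≤ t + |z m|`; together with `a ≤ h`
(from `a ≤ d / 2`, i.e. the apex angle is at most 60°) these force `d² ≤ 2 h t`. As `a > 0` we
have `h < d`, hence `t ≥ d² / (2h) > d / 2`. -/

open EuclideanGeometry

theorem sq_add_sq_le_two_mul_mul_of_le_add {h a s t : ℝ} (hh : 0 ≤ h) (hah : a ^ 2 ≤ h ^ 2)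
    (htri : h ≤ t + s) (hst : s ^ 2 + a ^ 2 ≤ t ^ 2) :
    h ^ 2 + a ^ 2 ≤ 2 * h * t := by
  rcases le_or_gt h t with hht | hth
  · nlinarith
  · have : (h - t) ^ 2 ≤ s ^ 2 := pow_le_pow_left₀ (by linarith) (by linarith) 2
    nlinarith

section

variable {V P : Type*} [NormedAddCommGroup V] [InnerProductSpace ℝ V] [MetricSpace P]
  [NormedAddTorsor V P]

theorem dist_midpoint_sq_add_le_two_mul_dist_midpoint_mul_max_dist {x y y' : P}
    (h : dist y y' / 2 ≤ dist x (midpoint ℝ y y')) (z : P) :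
    dist x (midpoint ℝ y y') ^ 2 + (dist y y' / 2) ^ 2 ≤
      2 * dist x (midpoint ℝ y y') * max (max (dist z x) (dist z y)) (dist z y') := by
  set m := midpoint ℝ y y'
  set t := max (max (dist z x) (dist z y)) (dist z y')
  have hzx : dist z x ≤ t := le_trans (le_max_left _ _) (le_max_left _ _)
  have hzy : dist z y ≤ t := le_trans (le_max_right _ _) (le_max_left _ _)
  have hzy' : dist z y' ≤ t := le_max_right _ _
  refine sq_add_sq_le_two_mul_mul_of_le_add (s := dist z m) dist_nonneg
    (pow_le_pow_left₀ (by positivity) h 2) ?_ ?_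
  · calc dist x m ≤ dist x z + dist z m := dist_triangle _ _ _
      _ ≤ t + dist z m := by rw [dist_comm]; gcongr
  · have := dist_sq_add_dist_sq_eq_two_mul_dist_midpoint_sq_add_half_dist_sq z y y'
    nlinarith [pow_le_pow_left₀ dist_nonneg hzy 2, pow_le_pow_left₀ dist_nonneg hzy' 2]

end

theorem euclidean_isosceles_circumradius_gt_general {d : ℝ}
    (x y y' : EuclideanSpace ℝ (Fin 2))
    (hxy : ‖x - y‖ = d) (hxy' : ‖x - y'‖ = d) (hne : y ≠ y') (hyy' : ‖y - y'‖ ≤ d) :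
    d / 2 < ⨅ z : EuclideanSpace ℝ (Fin 2), max (max ‖z - x‖ ‖z - y‖) ‖z - y'‖ := by
  simp only [← dist_eq_norm] at hxy hxy' hyy' ⊢
  have hapollonius := dist_sq_add_dist_sq_eq_two_mul_dist_midpoint_sq_add_half_dist_sq x y y'
  set h := dist x (midpoint ℝ y y')
  set a := dist y y' / 2 with ha_def
  replace hapollonius : h ^ 2 + a ^ 2 = d ^ 2 := by rw [hxy, hxy'] at hapollonius; linarith
  have ha : 0 < a := half_pos (dist_pos.mpr hne)
  have had : a ≤ d / 2 := by linarith
  have hh : 0 < h := by nlinarith [show 0 ≤ h from dist_nonneg]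
  have hah : a ≤ h := by nlinarith
  have hhd : h < d := by nlinarith
  have hbound (z : EuclideanSpace ℝ (Fin 2)) :
      d ^ 2 / (2 * h) ≤ max (max (dist z x) (dist z y)) (dist z y') := by
    rw [div_le_iff₀ (by positivity), ← hapollonius, mul_comm]
    exact dist_midpoint_sq_add_le_two_mul_dist_midpoint_mul_max_dist hah z
  calc d / 2 < d ^ 2 / (2 * h) := by
        rw [div_lt_div_iff₀ two_pos (by positivity)]; nlinarith
    _ ≤ _ := le_ciInf hbound

/-- In the Euclidean plane, an isosceles triangle with two equal legs of length `d`,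
distinct base vertices, and base at most `d` has circumradius strictly greater
than `d / 2`. -/
theorem euclidean_isosceles_circumradius_gt {d : ℝ} (hd : 0 < d)
    (x y y' : EuclideanSpace ℝ (Fin 2))
    (hxy : ‖x - y‖ = d) (hxy' : ‖x - y'‖ = d) (hne : y ≠ y') (hyy' : ‖y - y'‖ ≤ d) :
    d / 2 < ⨅ z : EuclideanSpace ℝ (Fin 2), max (max ‖z - x‖ ‖z - y‖) ‖z - y'‖ :=
  euclidean_isosceles_circumradius_gt_general x y y' hxy hxy' hne hyy'
end

section
/- The space ℝ² with the sup norm (ℓ^∞ norm) satisfies Curv ≤ 0: for every triangle (x₁,x₂,x₃), the circumradius with respect to the sup norm is at most the Euclidean circumradius of the comparison triangle. In particular, the ℓ^∞ circumradius equals half the longest side, while the Euclidean circumradius of any triangle is at least half its longest side. -/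
/-!
Any centre `c` of a triangle sees each side `xᵢxⱼ` within `dist c xᵢ + dist c xⱼ`, so in every
metric space the circumradius is at least half the longest side; this gives the Euclidean bound.
For the sup norm the bound is attained: in each coordinate the midpoint of the range of the three
coordinates is within half the longest side of all of them, and these midpoints form a centre.
-/

namespace Metric

variable {X : Type*} [PseudoMetricSpace X]

noncomputable def longestSide (x₁ x₂ x₃ : X) : ℝ :=
  max (max (dist x₁ x₂) (dist x₁ x₃)) (dist x₂ x₃)

noncomputable def circumradius (x₁ x₂ x₃ : X) : ℝ :=
  ⨅ c : X, max (max (dist c x₁) (dist c x₂)) (dist c x₃)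

theorem half_longestSide_le_max_dist (x₁ x₂ x₃ c : X) :
    (1 / 2) * longestSide x₁ x₂ x₃ ≤ max (max (dist c x₁) (dist c x₂)) (dist c x₃) := by
  set r := max (max (dist c x₁) (dist c x₂)) (dist c x₃)
  have h₁ : dist c x₁ ≤ r := le_max_of_le_left (le_max_left _ _)
  have h₂ : dist c x₂ ≤ r := le_max_of_le_left (le_max_right _ _)
  have h₃ : dist c x₃ ≤ r := le_max_right _ _
  have side (xᵢ xⱼ : X) (hᵢ : dist c xᵢ ≤ r) (hⱼ : dist c xⱼ ≤ r) : dist xᵢ xⱼ ≤ 2 * r := by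
    linarith [dist_triangle_left xᵢ xⱼ c]
  have : longestSide x₁ x₂ x₃ ≤ 2 * r :=
    max_le (max_le (side _ _ h₁ h₂) (side _ _ h₁ h₃)) (side _ _ h₂ h₃)
  linarith

theorem half_longestSide_le_circumradius [Nonempty X] (x₁ x₂ x₃ : X) :
    (1 / 2) * longestSide x₁ x₂ x₃ ≤ circumradius x₁ x₂ x₃ :=
  le_ciInf (half_longestSide_le_max_dist x₁ x₂ x₃)

theorem circumradius_le {x₁ x₂ x₃ c : X} {r : ℝ} (h₁ : dist c x₁ ≤ r) (h₂ : dist c x₂ ≤ r)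
    (h₃ : dist c x₃ ≤ r) : circumradius x₁ x₂ x₃ ≤ r :=
  (ciInf_le ⟨0, by rintro _ ⟨c, rfl⟩; positivity⟩ c).trans (max_le (max_le h₁ h₂) h₃)

end Metric

open Metric

theorem Real.exists_dist_le_half {a b c D : ℝ} (hab : dist a b ≤ D) (hac : dist a c ≤ D)
    (hbc : dist b c ≤ D) : ∃ m : ℝ, dist m a ≤ D / 2 ∧ dist m b ≤ D / 2 ∧ dist m c ≤ D / 2 := by
  simp only [Real.dist_eq, abs_le] at hab hac hbc ⊢
  refine ⟨(min (min a b) c + max (max a b) c) / 2, ?_, ?_, ?_⟩ <;> grind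

theorem Pi.exists_dist_le_half_longestSide {ι : Type*} [Fintype ι] (x₁ x₂ x₃ : ι → ℝ) :
    ∃ c : ι → ℝ, dist c x₁ ≤ longestSide x₁ x₂ x₃ / 2 ∧ dist c x₂ ≤ longestSide x₁ x₂ x₃ / 2 ∧
      dist c x₃ ≤ longestSide x₁ x₂ x₃ / 2 := by
  set D := longestSide x₁ x₂ x₃
  have h₁₂ : dist x₁ x₂ ≤ D := le_max_of_le_left (le_max_left _ _)
  have h₁₃ : dist x₁ x₃ ≤ D := le_max_of_le_left (le_max_right _ _)
  have h₂₃ : dist x₂ x₃ ≤ D := le_max_right _ _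
  have hD : 0 ≤ D / 2 := div_nonneg (dist_nonneg.trans h₁₂) zero_le_two
  choose c hc₁ hc₂ hc₃ using fun k ↦ Real.exists_dist_le_half
    ((dist_le_pi_dist x₁ x₂ k).trans h₁₂) ((dist_le_pi_dist x₁ x₃ k).trans h₁₃)
    ((dist_le_pi_dist x₂ x₃ k).trans h₂₃)
  exact ⟨c, (dist_pi_le_iff hD).2 hc₁, (dist_pi_le_iff hD).2 hc₂, (dist_pi_le_iff hD).2 hc₃⟩

theorem Pi.circumradius_eq_half_longestSide {ι : Type*} [Fintype ι] (x₁ x₂ x₃ : ι → ℝ) :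
    circumradius x₁ x₂ x₃ = (1 / 2) * longestSide x₁ x₂ x₃ := by
  obtain ⟨c, h₁, h₂, h₃⟩ := Pi.exists_dist_le_half_longestSide x₁ x₂ x₃
  refine le_antisymm ?_ (half_longestSide_le_circumradius x₁ x₂ x₃)
  rw [one_div_mul_eq_div]
  exact circumradius_le h₁ h₂ h₃

/-- `ℝ²` with the sup norm satisfies `Curv ≤ 0`: its circumradii equal half the longest
side, Euclidean circumradii are at least half the longest side, and hence the sup-norm
circumradius of a triangle is at most the Euclidean circumradius of its comparison
triangle. -/
theorem sup_norm_plane_curv_nonpos (x₁ x₂ x₃ : Fin 2 → ℝ)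
    (b₁ b₂ b₃ : EuclideanSpace ℝ (Fin 2))
    (h₁₂ : ‖b₁ - b₂‖ = dist x₁ x₂) (h₁₃ : ‖b₁ - b₃‖ = dist x₁ x₃)
    (h₂₃ : ‖b₂ - b₃‖ = dist x₂ x₃) :
    (⨅ c : Fin 2 → ℝ, max (max (dist c x₁) (dist c x₂)) (dist c x₃)) =
      (1 / 2) * max (max (dist x₁ x₂) (dist x₁ x₃)) (dist x₂ x₃) ∧
    (1 / 2) * max (max ‖b₁ - b₂‖ ‖b₁ - b₃‖) ‖b₂ - b₃‖ ≤
      (⨅ z : EuclideanSpace ℝ (Fin 2), max (max ‖z - b₁‖ ‖z - b₂‖) ‖z - b₃‖) ∧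
    (⨅ c : Fin 2 → ℝ, max (max (dist c x₁) (dist c x₂)) (dist c x₃)) ≤
      (⨅ z : EuclideanSpace ℝ (Fin 2), max (max ‖z - b₁‖ ‖z - b₂‖) ‖z - b₃‖) := by
  have sup := Pi.circumradius_eq_half_longestSide x₁ x₂ x₃
  have euclid := half_longestSide_le_circumradius b₁ b₂ b₃
  have same_sides : longestSide b₁ b₂ b₃ = longestSide x₁ x₂ x₃ := by
    rw [longestSide, longestSide, dist_eq_norm b₁, dist_eq_norm b₁, dist_eq_norm b₂, h₁₂, h₁₃, h₂₃]
  simp only [← dist_eq_norm]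
  refine ⟨sup, euclid, ?_⟩
  calc circumradius x₁ x₂ x₃ = (1 / 2) * longestSide b₁ b₂ b₃ := by rw [sup, same_sides]
    _ ≤ circumradius b₁ b₂ b₃ := euclid
end

section
/- For 2 < p < ∞, consider in (ℝ², ‖·‖_p) the points B = (-1,0), C = (1,0), and A' = (0,y) where y > 0 is chosen so that ‖A' - B‖_p = ‖A' - C‖_p = √2. Then the p-norm circumradius of (A', B, C) is strictly greater than 1, while a Euclidean comparison triangle for (A', B, C) has sides 2, √2, √2 and circumradius exactly 1. Hence (ℝ², ‖·‖_p) does not satisfy Curv ≤ 0. -/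
/-!
The side condition `1 + |y|^p = ‖A' - B‖^p = 2^(p/2)` forces `|y| > 1` once `p > 2`. For finite
`p` the closed `ℓ^p` unit balls about `B = (-1,0)` and `C = (1,0)` meet only where the second
coordinate vanishes (one of `|z₀ ± 1|` is at least `1`), and such points are at distance at least
`|y| > 1` from `A'`. As circumcentres exist in proper spaces, the circumradius of `A' B C` exceeds
`1`. The Euclidean comparison triangle with sides `√2, √2, 2` is right-angled, so by Thales the
midpoint of its long side is at distance `1` from all three vertices, and no point does better
with respect to the two ends of a segment of length `2`.
-/

open scoped ENNReal

open EuclideanGeometry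

noncomputable def circumradius {X : Type*} [PseudoMetricSpace X] (x₁ x₂ x₃ : X) : ℝ :=
  ⨅ z, max (max (dist z x₁) (dist z x₂)) (dist z x₃)

section Circumradius

variable {X : Type*} [PseudoMetricSpace X] (x₁ x₂ x₃ : X)

theorem circumradius_le (z : X) :
    circumradius x₁ x₂ x₃ ≤ max (max (dist z x₁) (dist z x₂)) (dist z x₃) :=
  ciInf_le ⟨0, by rintro _ ⟨w, rfl⟩; positivity⟩ z

theorem dist_div_two_le_circumradius : dist x₂ x₃ / 2 ≤ circumradius x₁ x₂ x₃ :=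
  have : Nonempty X := ⟨x₁⟩
  le_ciInf fun z => by
    have := dist_triangle_left x₂ x₃ z
    grind

theorem exists_max_dist_eq_circumradius [ProperSpace X] :
    ∃ z, max (max (dist z x₁) (dist z x₂)) (dist z x₃) = circumradius x₁ x₂ x₃ := by
  have : Nonempty X := ⟨x₁⟩
  have hcoercive : ∀ᶠ z in Filter.cocompact X,
      max (max (dist x₁ x₁) (dist x₁ x₂)) (dist x₁ x₃) ≤
        max (max (dist z x₁) (dist z x₂)) (dist z x₃) :=
    ((tendsto_dist_right_cocompact_atTop x₁).eventually_ge_atTop _).mono fun z hz =>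
      hz.trans ((le_max_left _ _).trans (le_max_left _ _))
  obtain ⟨z, hz⟩ := Continuous.exists_forall_le'
    (f := fun z => max (max (dist z x₁) (dist z x₂)) (dist z x₃)) (by fun_prop) x₁ hcoercive
  exact ⟨z, le_antisymm (le_ciInf hz) (circumradius_le x₁ x₂ x₃ z)⟩

end Circumradius

theorem EuclideanGeometry.circumradius_eq_dist_div_two_of_angle_eq_pi_div_two
    {V P : Type*} [NormedAddCommGroup V] [InnerProductSpace ℝ V] [MetricSpace P]
    [NormedAddTorsor V P] {b₁ b₂ b₃ : P} (h : ∠ b₂ b₁ b₃ = Real.pi / 2) :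
    circumradius b₁ b₂ b₃ = dist b₂ b₃ / 2 := by
  refine le_antisymm ?_ (dist_div_two_le_circumradius b₁ b₂ b₃)
  have hb₁ : dist b₁ (midpoint ℝ b₂ b₃) = dist b₂ b₃ / 2 :=
    Sphere.angle_eq_pi_div_two_iff_mem_sphere_ofDiameter.1 h
  calc circumradius b₁ b₂ b₃
      ≤ max (max (dist (midpoint ℝ b₂ b₃) b₁) (dist (midpoint ℝ b₂ b₃) b₂))
          (dist (midpoint ℝ b₂ b₃) b₃) := circumradius_le b₁ b₂ b₃ _
    _ = dist b₂ b₃ / 2 := by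
      rw [dist_comm, hb₁, dist_midpoint_left, dist_midpoint_right, Real.norm_two,
        inv_mul_eq_div, max_self, max_self]

theorem EuclideanGeometry.circumradius_eq_one_of_dist_eq_sqrt_two_sqrt_two_two
    {V P : Type*} [NormedAddCommGroup V] [InnerProductSpace ℝ V] [MetricSpace P]
    [NormedAddTorsor V P] {b₁ b₂ b₃ : P} (h₁₂ : dist b₁ b₂ = √2) (h₁₃ : dist b₁ b₃ = √2)
    (h₂₃ : dist b₂ b₃ = 2) : circumradius b₁ b₂ b₃ = 1 := by
  have hright : ∠ b₂ b₁ b₃ = Real.pi / 2 := by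
    rw [← dist_sq_eq_dist_sq_add_dist_sq_iff_angle_eq_pi_div_two, dist_comm b₂ b₁,
      dist_comm b₃ b₁, h₁₂, h₁₃, h₂₃]
    norm_num
  rw [circumradius_eq_dist_div_two_of_angle_eq_pi_div_two hright, h₂₃]
  norm_num

theorem PiLp.norm_rpow_eq_sum {p : ℝ≥0∞} {ι : Type*} [Fintype ι] {β : ι → Type*}
    [∀ i, SeminormedAddCommGroup (β i)] (hp : 0 < p.toReal) (f : PiLp p β) :
    ‖f‖ ^ p.toReal = ∑ i, ‖f i‖ ^ p.toReal := by
  rw [PiLp.norm_eq_sum hp, one_div, Real.rpow_inv_rpow (by positivity) hp.ne']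

section LpPlane

variable {p : ℝ≥0∞}

local notation "ℓp²" => PiLp p (fun _ : Fin 2 => ℝ)

theorem norm_rpow_eq_abs_rpow_add_abs_rpow (hp : 0 < p.toReal) (v : ℓp²) :
    ‖v‖ ^ p.toReal = |v 0| ^ p.toReal + |v 1| ^ p.toReal := by
  simp [PiLp.norm_rpow_eq_sum hp, Fin.sum_univ_two]

theorem apply_one_eq_zero_of_norm_sub_le_one [Fact (1 ≤ p)] (hp : p ≠ ∞) {z : ℓp²}
    (hB : ‖z - WithLp.toLp p ![-1, 0]‖ ≤ 1) (hC : ‖z - WithLp.toLp p ![1, 0]‖ ≤ 1) :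
    z 1 = 0 := by
  have hq : 0 < p.toReal := ENNReal.toReal_pos (zero_lt_one.trans_le Fact.out).ne' hp
  have coord_sum_le {v : ℓp²} (hv : ‖v‖ ≤ 1) : |v 0| ^ p.toReal + |v 1| ^ p.toReal ≤ 1 := by
    rw [← norm_rpow_eq_abs_rpow_add_abs_rpow hq]
    exact Real.rpow_le_one (norm_nonneg v) hv hq.le
  have hB' := coord_sum_le hB
  have hC' := coord_sum_le hC
  simp only [PiLp.sub_apply, Matrix.cons_val_zero, Matrix.cons_val_one, Matrix.cons_val_fin_one,
    sub_neg_eq_add, sub_zero] at hB' hC'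
  have hfar : 1 ≤ |z 0 + 1| ∨ 1 ≤ |z 0 - 1| := by
    rcases le_total 0 (z 0) with h | h
    · exact .inl (by rw [abs_of_nonneg (by linarith)]; linarith)
    · exact .inr (by rw [abs_of_nonpos (by linarith)]; linarith)
  by_contra hz
  have hz_pos := Real.rpow_pos_of_pos (abs_pos.2 hz) p.toReal
  rcases hfar with h | h <;> linarith [Real.one_le_rpow h hq.le]

theorem one_lt_circumradius_of_one_lt_abs [Fact (1 ≤ p)] (hp : p ≠ ∞) {y : ℝ} (hy : 1 < |y|) :
    1 < circumradius (WithLp.toLp p ![0, y] : ℓp²) (WithLp.toLp p ![-1, 0])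
      (WithLp.toLp p ![1, 0]) := by
  obtain ⟨z, hz⟩ := exists_max_dist_eq_circumradius (WithLp.toLp p ![0, y] : ℓp²)
    (WithLp.toLp p ![-1, 0]) (WithLp.toLp p ![1, 0])
  rw [← hz]
  by_contra! h
  obtain ⟨⟨hA, hB⟩, hC⟩ := max_le_iff.1 h |>.imp_left max_le_iff.1
  rw [dist_eq_norm] at hA hB hC
  have hz₁ := apply_one_eq_zero_of_norm_sub_le_one hp hB hC
  have hyA : |y| ≤ ‖z - WithLp.toLp p ![0, y]‖ := by
    simpa [hz₁] using PiLp.norm_apply_le (z - WithLp.toLp p ![0, y]) 1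
  linarith

theorem one_lt_abs_of_norm_eq_sqrt_two (hp : 2 < p) (hptop : p ≠ ∞) {y : ℝ}
    (h : ‖(WithLp.toLp p ![1, y] : ℓp²)‖ = √2) : 1 < |y| := by
  have hq : 2 < p.toReal := by
    simpa using (ENNReal.toReal_lt_toReal (by norm_num) hptop).2 hp
  have hsum : 1 + |y| ^ p.toReal = 2 ^ (p.toReal / 2) :=
    calc 1 + |y| ^ p.toReal = ‖(WithLp.toLp p ![1, y] : ℓp²)‖ ^ p.toReal := by
          simp [norm_rpow_eq_abs_rpow_add_abs_rpow (by linarith : 0 < p.toReal)]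
      _ = 2 ^ (p.toReal / 2) := by
          rw [h, Real.sqrt_eq_rpow, ← Real.rpow_mul zero_le_two, one_div_mul_eq_div]
  have h2 : (2 : ℝ) < 2 ^ (p.toReal / 2) := by
    simpa using Real.rpow_lt_rpow_of_exponent_lt (by norm_num : (1 : ℝ) < 2)
      (by linarith : 1 < p.toReal / 2)
  by_contra! hy
  linarith [Real.rpow_le_one (abs_nonneg y) hy (by linarith : 0 ≤ p.toReal)]

end LpPlane

theorem exists_euclidean_triangle_sqrt_two_sqrt_two_two :
    ∃ b₁ b₂ b₃ : EuclideanSpace ℝ (Fin 2), dist b₁ b₂ = √2 ∧ dist b₁ b₃ = √2 ∧ dist b₂ b₃ = 2 :=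
  ⟨!₂[0, 1], !₂[-1, 0], !₂[1, 0], by
    simp [EuclideanSpace.dist_eq, Real.dist_eq]; norm_num⟩

theorem lp_plane_not_curv_nonpos_general (p : ℝ≥0∞) [Fact (1 ≤ p)] (hp : 2 < p) (hptop : p ≠ ∞)
    (y : ℝ)
    (A' B C : PiLp p (fun _ : Fin 2 => ℝ))
    (hA' : A' = (WithLp.equiv p (Fin 2 → ℝ)).symm ![0, y])
    (hB : B = (WithLp.equiv p (Fin 2 → ℝ)).symm ![-1, 0])
    (hC : C = (WithLp.equiv p (Fin 2 → ℝ)).symm ![1, 0])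
    (hAB : ‖A' - B‖ = Real.sqrt 2) (hAC : ‖A' - C‖ = Real.sqrt 2) :
    (1 < ⨅ z : PiLp p (fun _ : Fin 2 => ℝ), max (max ‖z - A'‖ ‖z - B‖) ‖z - C‖) ∧
    (∀ b₁ b₂ b₃ : EuclideanSpace ℝ (Fin 2),
      ‖b₁ - b₂‖ = ‖A' - B‖ → ‖b₁ - b₃‖ = ‖A' - C‖ → ‖b₂ - b₃‖ = ‖B - C‖ →
      (⨅ z : EuclideanSpace ℝ (Fin 2), max (max ‖z - b₁‖ ‖z - b₂‖) ‖z - b₃‖) = 1) ∧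
    ¬ (∀ (x₁ x₂ x₃ : PiLp p (fun _ : Fin 2 => ℝ)) (b₁ b₂ b₃ : EuclideanSpace ℝ (Fin 2)),
        ‖b₁ - b₂‖ = dist x₁ x₂ → ‖b₁ - b₃‖ = dist x₁ x₃ → ‖b₂ - b₃‖ = dist x₂ x₃ →
        (⨅ z : PiLp p (fun _ : Fin 2 => ℝ), max (max (dist z x₁) (dist z x₂)) (dist z x₃)) ≤
          ⨅ z : EuclideanSpace ℝ (Fin 2), max (max ‖z - b₁‖ ‖z - b₂‖) ‖z - b₃‖) := by
  simp only [WithLp.equiv_symm_apply] at hA' hB hC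
  subst hA' hB hC
  have hy : 1 < |y| := one_lt_abs_of_norm_eq_sqrt_two hp hptop (by
    rw [← hAB]; congr 1; ext i; fin_cases i <;> simp)
  have hBC : ‖(WithLp.toLp p ![-1, 0] - WithLp.toLp p ![1, 0] : PiLp p (fun _ : Fin 2 => ℝ))‖ =
      2 := by
    rw [show (WithLp.toLp p ![-1, 0] - WithLp.toLp p ![1, 0] : PiLp p (fun _ : Fin 2 => ℝ)) =
      PiLp.single p 0 (-2) by ext i; fin_cases i <;> norm_num [PiLp.single_apply], PiLp.norm_single]
    norm_num
  have hcirc := one_lt_circumradius_of_one_lt_abs hptop hy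
  simp only [← dist_eq_norm] at hAB hAC hBC ⊢
  simp only [← circumradius.eq_1]
  obtain ⟨b₁, b₂, b₃, h₁₂, h₁₃, h₂₃⟩ := exists_euclidean_triangle_sqrt_two_sqrt_two_two
  refine ⟨hcirc, fun b₁ b₂ b₃ ↦ by
    rw [hAB, hAC, hBC]; exact circumradius_eq_one_of_dist_eq_sqrt_two_sqrt_two_two, fun hcurv ↦ ?_⟩
  have hle := hcurv _ _ _ b₁ b₂ b₃ (h₁₂.trans hAB.symm) (h₁₃.trans hAC.symm) (h₂₃.trans hBC.symm)
  rw [circumradius_eq_one_of_dist_eq_sqrt_two_sqrt_two_two h₁₂ h₁₃ h₂₃] at hle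
  exact hle.not_gt hcirc

/-- For `2 < p < ∞`, the triangle `A' = (0,y)`, `B = (-1,0)`, `C = (1,0)` with
`‖A' - B‖_p = ‖A' - C‖_p = √2` has `p`-norm circumradius strictly greater than `1`,
while every Euclidean comparison triangle has circumradius exactly `1`; hence
`(ℝ², ‖·‖_p)` does not satisfy `Curv ≤ 0`. -/
theorem lp_plane_not_curv_nonpos (p : ℝ≥0∞) [Fact (1 ≤ p)] (hp : 2 < p) (hptop : p ≠ ∞)
    (y : ℝ) (hy : 0 < y)
    (A' B C : PiLp p (fun _ : Fin 2 => ℝ))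
    (hA' : A' = (WithLp.equiv p (Fin 2 → ℝ)).symm ![0, y])
    (hB : B = (WithLp.equiv p (Fin 2 → ℝ)).symm ![-1, 0])
    (hC : C = (WithLp.equiv p (Fin 2 → ℝ)).symm ![1, 0])
    (hAB : ‖A' - B‖ = Real.sqrt 2) (hAC : ‖A' - C‖ = Real.sqrt 2) :
    (1 < ⨅ z : PiLp p (fun _ : Fin 2 => ℝ), max (max ‖z - A'‖ ‖z - B‖) ‖z - C‖) ∧
    (∀ b₁ b₂ b₃ : EuclideanSpace ℝ (Fin 2),
      ‖b₁ - b₂‖ = ‖A' - B‖ → ‖b₁ - b₃‖ = ‖A' - C‖ → ‖b₂ - b₃‖ = ‖B - C‖ →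
      (⨅ z : EuclideanSpace ℝ (Fin 2), max (max ‖z - b₁‖ ‖z - b₂‖) ‖z - b₃‖) = 1) ∧
    ¬ (∀ (x₁ x₂ x₃ : PiLp p (fun _ : Fin 2 => ℝ)) (b₁ b₂ b₃ : EuclideanSpace ℝ (Fin 2)),
        ‖b₁ - b₂‖ = dist x₁ x₂ → ‖b₁ - b₃‖ = dist x₁ x₃ → ‖b₂ - b₃‖ = dist x₂ x₃ →
        (⨅ z : PiLp p (fun _ : Fin 2 => ℝ), max (max (dist z x₁) (dist z x₂)) (dist z x₃)) ≤
          ⨅ z : EuclideanSpace ℝ (Fin 2), max (max ‖z - b₁‖ ‖z - b₂‖) ‖z - b₃‖) :=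
  lp_plane_not_curv_nonpos_general p hp hptop y A' B C hA' hB hC hAB hAC
end
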